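/- arXiv:math/0503373 — 7 statements merged into one kernel-verified Lean document; each statement's English description precedes it below -/
import Mathlib

section
/- For any sequence (h_k)_{k≥1} of real numbers with μ + Σ_{k=1}^∞ |h_k| ≤ 2 where 0 ≤ μ < 1, and any sequence (a_n) with |a_n| ≤ μ for all n, define recursively w_n = Σ_{k=1}^n h_k v_{n-k} + a_n, q_n = sign(w_n) (with sign(0)=1), v_n = w_n − q_n. Then |v_n| ≤ 1 for all n ≥ 0. -/
/-!
By strong induction: if `|v m| ≤ 1` for all `m < n`, then `|w n|` is at most
`∑ |h k| + |a n| ≤ 2`, and subtracting the sign of a number of absolute value at most `2`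
leaves a number of absolute value at most `1`.
-/

open Finset

lemma abs_sub_sign_le_one {x : ℝ} (hx : |x| ≤ 2) :
    |x - (if 0 ≤ x then 1 else -1)| ≤ 1 := by
  rw [abs_le] at hx ⊢
  split_ifs with h <;> constructor <;> linarith

lemma sum_Icc_one_le_tsum_succ {f : ℕ → ℝ} (hf0 : ∀ k, 0 ≤ f k)
    (hf : Summable fun k => f (k + 1)) (n : ℕ) :
    ∑ k ∈ Icc 1 n, f k ≤ ∑' k, f (k + 1) := by
  have hshift : ∑ k ∈ Icc 1 n, f k = ∑ k ∈ range n, f (k + 1) := by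
    rw [← Ico_add_one_right_eq_Icc, sum_Ico_eq_sum_range]
    simp only [Nat.add_sub_cancel, add_comm 1]
  rw [hshift]
  exact hf.sum_le_tsum _ fun k _ => hf0 (k + 1)

lemma abs_sum_Icc_mul_le_tsum {h v : ℕ → ℝ} (hsum : Summable fun k => |h (k + 1)|) {n : ℕ}
    (hv : ∀ m < n, |v m| ≤ 1) :
    |∑ k ∈ Icc 1 n, h k * v (n - k)| ≤ ∑' k, |h (k + 1)| :=
  calc |∑ k ∈ Icc 1 n, h k * v (n - k)|
      ≤ ∑ k ∈ Icc 1 n, |h k| * |v (n - k)| := by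
        simpa only [abs_mul] using abs_sum_le_sum_abs (fun k => h k * v (n - k)) (Icc 1 n)
    _ ≤ ∑ k ∈ Icc 1 n, |h k| := by
        refine sum_le_sum fun k hk => mul_le_of_le_one_right (abs_nonneg _) (hv _ ?_)
        have := mem_Icc.mp hk
        omega
    _ ≤ ∑' k, |h (k + 1)| := sum_Icc_one_le_tsum_succ (fun _ => abs_nonneg _) hsum n

theorem v_bounded_general (μ : ℝ)
    (h a w q v : ℕ → ℝ)
    (hsum : Summable fun k => |h (k + 1)|)
    (hnorm : μ + ∑' k : ℕ, |h (k + 1)| ≤ 2)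
    (ha : ∀ n, |a n| ≤ μ)
    (hw : ∀ n, w n = (∑ k ∈ Finset.Icc 1 n, h k * v (n - k)) + a n)
    (hq : ∀ n, q n = if 0 ≤ w n then 1 else -1)
    (hv : ∀ n, v n = w n - q n) :
    ∀ n, |v n| ≤ 1 := by
  intro n
  induction n using Nat.strong_induction_on with
  | _ n ih =>
    have hconv := abs_sum_Icc_mul_le_tsum hsum ih
    have hw_le : |w n| ≤ 2 :=
      calc |w n| ≤ |∑ k ∈ Icc 1 n, h k * v (n - k)| + |a n| := hw n ▸ abs_add_le _ _
        _ ≤ 2 := by linarith [ha n]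
    rw [hv n, hq n]
    exact abs_sub_sign_le_one hw_le

/-- boundedness `|v n| ≤ 1` for the quantization recursion. -/
theorem v_bounded (μ : ℝ) (hμ0 : 0 ≤ μ) (hμ1 : μ < 1)
    (h a w q v : ℕ → ℝ)
    (hsum : Summable fun k => |h (k + 1)|)
    (hnorm : μ + ∑' k : ℕ, |h (k + 1)| ≤ 2)
    (ha : ∀ n, |a n| ≤ μ)
    (hw : ∀ n, w n = (∑ k ∈ Finset.Icc 1 n, h k * v (n - k)) + a n)
    (hq : ∀ n, q n = if 0 ≤ w n then 1 else -1)
    (hv : ∀ n, v n = w n - q n) :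
    ∀ n, |v n| ≤ 1 :=
  v_bounded_general μ h a w q v hsum hnorm ha hw hq hv
end

section
/- Let σ be a positive integer, c_σ = sinh(πσ^{-1/2})/(πσ^{-1/2}), and define h_1 = c_σ and h_{σn²+1} = 2c_σ(−1)^n/(σn²+1) for n ≥ 1, with h_k = 0 otherwise. Then Σ_{k=1}^∞ |h_k| = cosh(πσ^{-1/2}). -/
/-!
Mathlib's Mittag-Leffler expansion of `π cot (π z)`, taken at the purely imaginary point `z = a i`,
becomes `π coth (π a) = 1 / a + ∑_{n ≥ 1} 2a / (a² + n²)`. With `a = σ^{-1/2}` the nonzero terms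
`|h_{σn²+1}| = 2c_σ / (σn² + 1)` are `(sinh (π a) / π) · 2a / (a² + n²)`, so they add up to
`cosh (π a) - c_σ`, and `|h_1| = c_σ` supplies the rest.
-/

open Real

theorem hasSum_two_mul_div_sq_add_succ_sq {a : ℝ} (ha : a ≠ 0) :
    HasSum (fun n : ℕ => 2 * a / (a ^ 2 + ((n : ℝ) + 1) ^ 2))
      (π * cosh (π * a) / sinh (π * a) - 1 / a) := by
  have hx : (a * Complex.I : ℂ) ∈ Complex.integerComplement := by
    rintro ⟨n, hn⟩
    exact ha (by simpa [eq_comm] using congrArg Complex.im hn)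
  have hsum := cot_series_rep' hx ▸ (summable_cotTerm hx).hasSum
  have hterm (n : ℕ) :
      ((2 * a / (a ^ 2 + ((n : ℝ) + 1) ^ 2) : ℝ) : ℂ) = cotTerm (a * Complex.I) n * Complex.I := by
    have h₁ := Complex.integerComplement_add_ne_zero hx (n + 1)
    have h₂ := Complex.integerComplement_add_ne_zero hx (-(n + 1))
    have h₃ : (a : ℂ) ^ 2 + ((n : ℂ) + 1) ^ 2 ≠ 0 := by
      exact_mod_cast (by positivity : a ^ 2 + ((n : ℝ) + 1) ^ 2 ≠ 0)
    push_cast [← sub_eq_add_neg] at h₁ h₂ ⊢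
    field_simp
    linear_combination (-2 * a * ((n : ℂ) + 1) ^ 2) * Complex.I_sq
  have hlim : ((π * cosh (π * a) / sinh (π * a) - 1 / a : ℝ) : ℂ) =
      (π * Complex.cot (π * (a * Complex.I)) - 1 / (a * Complex.I)) * Complex.I := by
    have hsinh : (sinh (π * a) : ℂ) ≠ 0 := by
      exact_mod_cast Real.sinh_ne_zero.mpr (by positivity)
    rw [Complex.cot_eq_cos_div_sin, ← mul_assoc, ← Complex.ofReal_mul,
      Complex.cos_mul_I, Complex.sin_mul_I, ← Complex.ofReal_cosh, ← Complex.ofReal_sinh]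
    push_cast
    field_simp
  rw [← Complex.hasSum_ofReal, funext hterm, hlim]
  exact hsum.mul_right Complex.I

theorem hasSum_sinh_div_mul_two_div_mul_succ_sq_add_one {s : ℝ} (hs : 0 < s) :
    HasSum (fun n : ℕ => 2 * (sinh (π / √s) / (π / √s)) / (s * ((n : ℝ) + 1) ^ 2 + 1))
      (cosh (π / √s) - sinh (π / √s) / (π / √s)) := by
  have hs' : 0 < √s := Real.sqrt_pos.mpr hs
  have hsinh : sinh (π / √s) ≠ 0 := Real.sinh_ne_zero.mpr (by positivity)
  have key := (hasSum_two_mul_div_sq_add_succ_sq (inv_ne_zero hs'.ne')).mul_left (sinh (π / √s) / π)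
  simp only [← div_eq_mul_inv] at key
  have hterm : (fun n : ℕ => 2 * (sinh (π / √s) / (π / √s)) / (s * ((n : ℝ) + 1) ^ 2 + 1)) =
      fun n : ℕ => sinh (π / √s) / π * (2 / √s / ((√s)⁻¹ ^ 2 + ((n : ℝ) + 1) ^ 2)) := by
    funext n
    field_simp
    rw [Real.sq_sqrt hs.le]
    ring
  have hlim : cosh (π / √s) - sinh (π / √s) / (π / √s) =
      sinh (π / √s) / π * (π * cosh (π / √s) / sinh (π / √s) - 1 / (√s)⁻¹) := by
    field_simp
  rwa [hterm, hlim]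

/-- `Σ_{k≥1} |h_k| = cosh(π σ^{-1/2})` for the particular sequence `h`. -/
theorem h_norm (σ : ℕ) (hσ : 0 < σ) (h : ℕ → ℝ)
    (h1 : h 1 = Real.sinh (π / Real.sqrt σ) / (π / Real.sqrt σ))
    (hmain : ∀ n : ℕ, 1 ≤ n →
      h (σ * n ^ 2 + 1) =
        2 * (Real.sinh (π / Real.sqrt σ) / (π / Real.sqrt σ)) * (-1) ^ n /
          (σ * n ^ 2 + 1))
    (hzero : ∀ k : ℕ, k ≠ 1 → (∀ n : ℕ, 1 ≤ n → k ≠ σ * n ^ 2 + 1) → h k = 0) :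
    ∑' k : ℕ, |h (k + 1)| = Real.cosh (π / Real.sqrt σ) := by
  have hσ' : (0 : ℝ) < σ := by exact_mod_cast hσ
  have hc : 0 < sinh (π / √σ) / (π / √σ) := by
    have : 0 < π / √σ := by positivity
    exact div_pos (sinh_pos_iff.mpr this) this
  have hterm (n : ℕ) : |h (σ * (n + 1) ^ 2 + 1)| =
      2 * (sinh (π / √σ) / (π / √σ)) / (σ * ((n : ℝ) + 1) ^ 2 + 1) := by
    rw [hmain _ n.succ_pos, abs_div, abs_mul, abs_neg_one_pow, mul_one, abs_of_pos (by positivity),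
      abs_of_pos (by positivity)]
    push_cast
    rfl
  have hsubseq : HasSum (fun n : ℕ => |h (σ * n ^ 2 + 1)|) (cosh (π / √σ)) := by
    have := HasSum.zero_add (f := fun n : ℕ => |h (σ * n ^ 2 + 1)|)
      (funext hterm ▸ hasSum_sinh_div_mul_two_div_mul_succ_sq_add_one hσ')
    simpa [h1, abs_of_pos hc] using this
  have hinj : Function.Injective (fun n : ℕ => σ * n ^ 2) := fun m n hmn =>
    Nat.pow_left_injective two_ne_zero (Nat.eq_of_mul_eq_mul_left hσ hmn)
  have hvanish : ∀ k ∉ Set.range (fun n : ℕ => σ * n ^ 2), |h (k + 1)| = 0 := by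
    intro k hk
    have hk1 : k + 1 ≠ 1 := fun hk1 =>
      hk ⟨0, show σ * 0 ^ 2 = k by rw [zero_pow two_ne_zero, mul_zero]; omega⟩
    have hkn : ∀ n : ℕ, 1 ≤ n → k + 1 ≠ σ * n ^ 2 + 1 := fun n _ hkn =>
      hk ⟨n, show σ * n ^ 2 = k by omega⟩
    rw [hzero (k + 1) hk1 hkn, abs_zero]
  exact ((hinj.hasSum_iff hvanish).mp hsubseq).tsum_eq
end

section
/- For every complex λ with Re(λ) > 0, Σ_{n∈ℤ} (−1)^n e^{−πλn²} = λ^{−1/2} Σ_{n∈ℤ} e^{−π(n−1/2)²/λ}, where λ^{−1/2} uses the principal branch. -/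
open Real Complex

/-- Jacobi theta transformation for `Θ₄`. -/
theorem theta4_transformation (lam : ℂ) (hlam : 0 < lam.re) :
    ∑' n : ℤ, (-1 : ℂ) ^ n * Complex.exp (-π * lam * (n : ℂ) ^ 2) =
      lam ^ (-(1 / 2) : ℂ) *
        ∑' n : ℤ, Complex.exp (-π * ((n : ℂ) - 1 / 2) ^ 2 / lam) := by
  have h := Complex.tsum_exp_neg_quadratic hlam (I / 2)
  have e1 : ∀ n : ℤ, Complex.exp (-π * lam * (n : ℂ) ^ 2 + 2 * π * (I / 2) * n)
      = (-1 : ℂ) ^ n * Complex.exp (-π * lam * (n : ℂ) ^ 2) := by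
    intro n
    rw [Complex.exp_add, mul_comm]
    congr 1
    have h2 : (2 * (π : ℂ) * (I / 2) * (n : ℂ)) = (n : ℤ) * ((π : ℂ) * I) := by
      push_cast; ring
    rw [h2, Complex.exp_int_mul, Complex.exp_pi_mul_I]
  have e2 : ∀ n : ℤ, Complex.exp (-π / lam * ((n : ℂ) + I * (I / 2)) ^ 2)
      = Complex.exp (-π * ((n : ℂ) - 1 / 2) ^ 2 / lam) := by
    intro n
    congr 1
    have h3 : ((n : ℂ) + I * (I / 2)) = (n : ℂ) - 1 / 2 := by
      have : (I : ℂ) * (I / 2) = -(1 / 2) := by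
        rw [mul_div_assoc', Complex.I_mul_I]; norm_num
      rw [this]; ring
    rw [h3]; ring
  calc ∑' n : ℤ, (-1 : ℂ) ^ n * Complex.exp (-π * lam * (n : ℂ) ^ 2)
      = ∑' n : ℤ, Complex.exp (-π * lam * (n : ℂ) ^ 2 + 2 * π * (I / 2) * n) :=
        tsum_congr fun n => (e1 n).symm
    _ = 1 / lam ^ (1 / 2 : ℂ) *
          ∑' n : ℤ, Complex.exp (-π / lam * ((n : ℂ) + I * (I / 2)) ^ 2) := h
    _ = lam ^ (-(1 / 2) : ℂ) *
          ∑' n : ℤ, Complex.exp (-π * ((n : ℂ) - 1 / 2) ^ 2 / lam) := by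
        rw [Complex.cpow_neg, one_div]
        exact congrArg _ (tsum_congr e2)
end

section
/- There is an absolute constant C > 0 such that for every complex λ with Re(λ) > 0 and every positive integer σ, |Σ_{n∈ℤ} (−1)^n e^{−λσn²}| ≤ C |λσ|^{−1/2} (1 + σ/Re(1/λ)) e^{−(π²/(4σ)) Re(1/λ)}. -/
/-!
The sum is `θ(1/2, iλσ/π)`. Jacobi's functional equation turns it into
`(π/λσ)^{1/2} e^{-π²/(4λσ)} θ(-π/(2iλσ), iπ/(λσ))`, where the remaining theta series has terms of modulus
`e^{-x n(n+1)}` with `x = π² Re(1/λ)/σ`. The terms `n = 0, -1` equal `1` and the others are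
dominated by a geometric series, so the series is at most `2/(1 - e^{-x}) ≤ 2(1 + 1/x)`.
-/

open Real Complex

lemma inv_one_sub_exp_neg_le_one_add_inv {t : ℝ} (ht : 0 < t) : (1 - rexp (-t))⁻¹ ≤ 1 + t⁻¹ := by
  have hexp : t ≤ rexp t - 1 := by linarith [add_one_le_exp t]
  calc (1 - rexp (-t))⁻¹ = 1 + (rexp t - 1)⁻¹ := by
        have : rexp t - 1 ≠ 0 := by linarith
        rw [Real.exp_neg]; field_simp; ring
    _ ≤ 1 + t⁻¹ := by gcongr

lemma tsum_exp_neg_mul_mul_add_one_le {t : ℝ} (ht : 0 < t) :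
    ∑' n : ℤ, rexp (-t * (n * (n + 1))) ≤ 2 / (1 - rexp (-t)) := by
  have hr : rexp (-t) < 1 := Real.exp_lt_one_iff.mpr (by linarith)
  set g : ℕ → ℝ := fun n ↦ rexp (-t * (n * (n + 1)))
  have hg : ∀ n, g n ≤ rexp (-t) ^ n := fun n ↦ by
    rw [← Real.exp_nat_mul, Real.exp_le_exp]
    nlinarith [mul_nonneg ht.le (sq_nonneg (n : ℝ))]
  have hgeom := summable_geometric_of_lt_one (Real.exp_pos _).le hr
  have hg_summable : Summable g := .of_nonneg_of_le (fun _ ↦ (Real.exp_pos _).le) hg hgeom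
  have hneg : ∀ n : ℕ, rexp (-t * (((-(n + 1) : ℤ) : ℝ) * (((-(n + 1) : ℤ) : ℝ) + 1))) = g n :=
    fun n ↦ by simp only [g]; push_cast; ring_nf
  rw [tsum_of_nat_of_neg_add_one (f := fun n : ℤ ↦ rexp (-t * (n * (n + 1))))
    (hg_summable.congr fun n ↦ by simp [g]) (by simpa only [hneg] using hg_summable)]
  simp only [hneg, Int.cast_natCast]
  calc ∑' n : ℕ, g n + ∑' n : ℕ, g n ≤ 2 * ∑' n : ℕ, rexp (-t) ^ n := by
        linarith [hg_summable.tsum_le_tsum hg hgeom]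
    _ = 2 / (1 - rexp (-t)) := by
        rw [tsum_geometric_of_lt_one (Real.exp_pos _).le hr, div_eq_mul_inv]

lemma norm_jacobiTheta₂_le_of_im_eq_half {z τ : ℂ} (hτ : 0 < τ.im) (hz : z.im = τ.im / 2) :
    ‖jacobiTheta₂ z τ‖ ≤ 2 / (1 - rexp (-(π * τ.im))) := by
  have hterm : ∀ n : ℤ, ‖jacobiTheta₂_term n z τ‖ = rexp (-(π * τ.im) * (n * (n + 1))) :=
    fun n ↦ by rw [norm_jacobiTheta₂_term, hz]; ring_nf
  calc ‖jacobiTheta₂ z τ‖ ≤ ∑' n : ℤ, ‖jacobiTheta₂_term n z τ‖ :=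
        norm_tsum_le_tsum_norm ((summable_jacobiTheta₂_term_iff z τ).mpr hτ).norm
    _ = ∑' n : ℤ, rexp (-(π * τ.im) * (n * (n + 1))) := tsum_congr hterm
    _ ≤ _ := tsum_exp_neg_mul_mul_add_one_le (by positivity)

lemma tsum_neg_one_zpow_mul_cexp_eq_jacobiTheta₂ (w : ℂ) :
    ∑' n : ℤ, (-1 : ℂ) ^ n * cexp (-w * n ^ 2) = jacobiTheta₂ (1 / 2) (I * w / π) := by
  refine tsum_congr fun n ↦ ?_
  rw [jacobiTheta₂_term, Complex.exp_add,
    show 2 * (π : ℂ) * I * n * (1 / 2) = n * (π * I) by ring, Complex.exp_int_mul,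
    Complex.exp_pi_mul_I]
  congr 2
  field_simp
  ring_nf
  simp [Complex.I_sq]

lemma norm_jacobiTheta₂_half_le {w : ℂ} (hw : 0 < w.re) :
    ‖jacobiTheta₂ (1 / 2) (I * w / π)‖ ≤
      √π * ‖w‖ ^ (-(1 / 2) : ℝ) * rexp (-(π ^ 2 / 4) * w⁻¹.re) *
        (2 / (1 - rexp (-(π ^ 2 * w⁻¹.re)))) := by
  have hw0 : w ≠ 0 := fun h ↦ by simp [h] at hw
  set τ := I * w / π
  have hprefactor : ‖1 / (-I * τ) ^ (1 / 2 : ℂ)‖ = √π * ‖w‖ ^ (-(1 / 2) : ℝ) := by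
    have : -I * τ = w / π := by
      simp only [τ]; field_simp; ring_nf; simp [Complex.I_sq]
    rw [this, norm_div, norm_one, show (1 / 2 : ℂ) = ((1 / 2 : ℝ) : ℂ) by norm_num,
      Complex.norm_cpow_real, norm_div, Complex.norm_of_nonneg pi_pos.le,
      Real.div_rpow (norm_nonneg _) pi_pos.le, Real.sqrt_eq_rpow,
      Real.rpow_neg (norm_nonneg w), one_div_div, div_eq_mul_inv]
  have hexp : ‖cexp (-π * I * (1 / 2) ^ 2 / τ)‖ = rexp (-(π ^ 2 / 4) * w⁻¹.re) := by
    have : -π * I * (1 / 2) ^ 2 / τ = ((-(π ^ 2 / 4) : ℝ) : ℂ) * w⁻¹ := by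
      simp only [τ]; push_cast; field_simp; ring_nf
    rw [this, Complex.norm_exp, Complex.re_ofReal_mul]
  have hdual : -1 / τ = I * (π * w⁻¹) := by
    simp only [τ]; field_simp; ring_nf; simp [Complex.I_sq]
  have hdual_im : (-1 / τ).im = π * w⁻¹.re := by
    rw [hdual, Complex.I_mul_im, Complex.re_ofReal_mul]
  have hdual_pos : 0 < (-1 / τ).im := by
    rw [hdual_im, Complex.inv_re]
    exact mul_pos pi_pos (div_pos hw (Complex.normSq_pos.mpr hw0))
  have hshift_im : (-(1 / 2 / τ)).im = (-1 / τ).im / 2 := by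
    rw [show -(1 / 2 / τ) = ((1 / 2 : ℝ) : ℂ) * (-1 / τ) by push_cast; ring,
      Complex.im_ofReal_mul]
    ring
  rw [jacobiTheta₂_functional_equation, norm_mul, norm_mul, hprefactor, hexp,
    ← jacobiTheta₂_neg_left]
  gcongr
  refine (norm_jacobiTheta₂_le_of_im_eq_half hdual_pos hshift_im).trans_eq ?_
  rw [hdual_im, ← mul_assoc, ← sq]

/-- the theta function bound. -/
theorem theta_bound :
    ∃ C : ℝ, 0 < C ∧ ∀ lam : ℂ, 0 < lam.re → ∀ σ : ℕ, 0 < σ →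
      ‖∑' n : ℤ, (-1 : ℂ) ^ n * Complex.exp (-lam * (σ : ℂ) * (n : ℂ) ^ 2)‖ ≤
        C * ‖lam * (σ : ℂ)‖ ^ (-(1 / 2) : ℝ) * (1 + (σ : ℝ) / (1 / lam).re) *
          Real.exp (-(π ^ 2 / (4 * σ)) * (1 / lam).re) := by
  refine ⟨2 * √π, by positivity, fun lam hlam σ hσ ↦ ?_⟩
  have hσ' : (0 : ℝ) < σ := Nat.cast_pos.mpr hσ
  have hr : 0 < lam⁻¹.re := by
    rw [Complex.inv_re]
    exact div_pos hlam (Complex.normSq_pos.mpr fun h ↦ by simp [h] at hlam)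
  have hw : 0 < (lam * σ).re := by simpa using mul_pos hlam hσ'
  have hwinv : (lam * σ)⁻¹.re = lam⁻¹.re / σ := by
    rw [mul_inv, ← Complex.ofReal_natCast, ← Complex.ofReal_inv, Complex.re_mul_ofReal,
      div_eq_mul_inv]
  have hexponent : -(π ^ 2 / 4) * (lam⁻¹.re / σ) = -(π ^ 2 / (4 * σ)) * lam⁻¹.re := by
    field_simp
  have hcorrection :
      2 / (1 - rexp (-(π ^ 2 * (lam⁻¹.re / σ)))) ≤ 2 * (1 + σ / lam⁻¹.re) := by
    rw [div_eq_mul_inv]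
    gcongr
    refine (inv_one_sub_exp_neg_le_one_add_inv (by positivity)).trans ?_
    rw [show (π ^ 2 * (lam⁻¹.re / σ))⁻¹ = σ / lam⁻¹.re / π ^ 2 by field_simp]
    have hπ : 1 ≤ π ^ 2 := by nlinarith [pi_gt_three]
    linarith [div_le_self (a := σ / lam⁻¹.re) (by positivity) hπ]
  simp_rw [neg_mul lam (σ : ℂ), tsum_neg_one_zpow_mul_cexp_eq_jacobiTheta₂, one_div lam]
  refine (norm_jacobiTheta₂_half_le hw).trans ?_
  rw [hwinv, hexponent]
  calc _ ≤ √π * ‖lam * σ‖ ^ (-(1 / 2) : ℝ) * rexp (-(π ^ 2 / (4 * σ)) * lam⁻¹.re) *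
        (2 * (1 + σ / lam⁻¹.re)) := by gcongr
    _ = _ := by ring
end

section
/- Let M ≥ 1, R_M = {z ∈ ℂ : |1−z| ≤ M(1−|z|)}, and K_M = (R_M ∩ {Re z ≤ 0}) ∪ {|z| ≤ 1/2}. There exists an absolute constant c > 0 such that: if z ∈ R_M \ K_M, s ∈ [z,1) lies on the segment from z to 1, and s = e^{−λ} with −π/2 ≤ Im(λ) ≤ π/2, then Re(1/λ) ≥ c/(M|1−s|). -/
/-!
Write `r = |s|`, `d = |1 - s|`, so that `Re λ = -log r`. By convexity of `R_M` the point `s`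
still satisfies `d ≤ M (1 - r)`, and since `Re z > 0`, `|z| > 1/2` the whole segment `[z, 1]`
stays outside the disc of radius `1/√5`. From `1 - r ≤ Re λ ≤ (1 - r)/r` we get
`d/M ≤ Re λ ≤ d/r`, and Jordan's inequality with `r |sin Im λ| = |Im s| ≤ d` gives
`|Im λ| ≤ (π/2) d/r`. Hence `|λ|² ≤ 5 (1 + π²/4) d² ≤ 25 d²`, and
`Re(1/λ) = Re λ / |λ|² ≥ 1/(25 M d)`.
-/

open Real

theorem convex_setOf_norm_sub_le_mul_one_sub_norm {E : Type*} [NormedAddCommGroup E]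
    [NormedSpace ℝ E] (x : E) {M : ℝ} (hM : 0 ≤ M) :
    Convex ℝ {w : E | ‖x - w‖ ≤ M * (1 - ‖w‖)} := by
  have hf : ConvexOn ℝ Set.univ fun w : E => dist w x + M * ‖w‖ :=
    (convexOn_univ_dist x).add (convexOn_univ_norm.smul hM)
  convert hf.convex_le M using 1
  ext w
  simp only [Set.mem_ofPred_eq, Set.mem_univ, true_and, dist_eq_norm, norm_sub_rev w x]
  constructor <;> intro h <;> linarith

theorem one_fifth_le_norm_sq_of_mem_segment {z s : ℂ} (hz_re : 0 < z.re) (hz : 1 / 2 < ‖z‖)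
    (hs : s ∈ segment ℝ z 1) : 1 / 5 ≤ ‖s‖ ^ 2 := by
  obtain ⟨a, b, ha, hb, hab, rfl⟩ := hs
  have hz2 : 1 / 4 < ‖z‖ ^ 2 := by nlinarith [norm_nonneg z]
  rw [Complex.sq_norm, Complex.normSq_apply] at hz2 ⊢
  simp only [Complex.add_re, Complex.add_im, Complex.smul_re, Complex.smul_im, Complex.one_re,
    Complex.one_im, smul_eq_mul, mul_one, mul_zero, add_zero]
  nlinarith [sq_nonneg (5 * b - 1), mul_nonneg (mul_nonneg ha hb) hz_re.le,
    mul_le_mul_of_nonneg_left hz2.le (sq_nonneg a)]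

theorem one_sub_norm_le_re_of_eq_exp_neg {s lam : ℂ} (hs : s = Complex.exp (-lam)) :
    1 - ‖s‖ ≤ lam.re := by
  have := Real.add_one_le_exp (-lam.re)
  rw [hs, Complex.norm_exp, Complex.neg_re]
  linarith

theorem norm_mul_re_le_of_eq_exp_neg {s lam : ℂ} (hs : s = Complex.exp (-lam)) :
    ‖s‖ * lam.re ≤ 1 - ‖s‖ := by
  have h := mul_le_mul_of_nonneg_left (Real.add_one_le_exp lam.re) (Real.exp_nonneg (-lam.re))
  rw [← Real.exp_add, neg_add_cancel, Real.exp_zero] at h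
  rw [hs, Complex.norm_exp, Complex.neg_re]
  linarith

theorem norm_mul_abs_sin_im_le_of_eq_exp_neg {s lam : ℂ} (hs : s = Complex.exp (-lam)) :
    ‖s‖ * |Real.sin lam.im| ≤ ‖1 - s‖ := by
  have h := Complex.abs_im_le_norm (1 - s)
  rw [hs, Complex.norm_exp] at *
  simpa [Complex.exp_im, abs_mul, Real.sin_neg] using h

theorem norm_sq_mul_normSq_le_of_eq_exp_neg {s lam : ℂ} (hs : s = Complex.exp (-lam))
    (hs_le : ‖s‖ ≤ 1) (him : |lam.im| ≤ π / 2) :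
    ‖s‖ ^ 2 * Complex.normSq lam ≤ (1 + π ^ 2 / 4) * ‖1 - s‖ ^ 2 := by
  have hdist : 1 - ‖s‖ ≤ ‖1 - s‖ := by simpa using norm_sub_norm_le (1 : ℂ) s
  have hre_nonneg : 0 ≤ ‖s‖ * lam.re :=
    mul_nonneg (norm_nonneg s) (by linarith [one_sub_norm_le_re_of_eq_exp_neg hs])
  have hre : ‖s‖ * lam.re ≤ ‖1 - s‖ := (norm_mul_re_le_of_eq_exp_neg hs).trans hdist
  have him' : ‖s‖ * |lam.im| ≤ π / 2 * ‖1 - s‖ := by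
    have hjordan : |lam.im| ≤ π / 2 * |Real.sin lam.im| := by
      have := Real.mul_abs_le_abs_sin him
      rw [div_mul_eq_mul_div, div_le_iff₀ pi_pos] at this
      linarith
    calc ‖s‖ * |lam.im| ≤ ‖s‖ * (π / 2 * |Real.sin lam.im|) := by gcongr
      _ = π / 2 * (‖s‖ * |Real.sin lam.im|) := by ring
      _ ≤ π / 2 * ‖1 - s‖ := by gcongr; exact norm_mul_abs_sin_im_le_of_eq_exp_neg hs
  have hre_sq := pow_le_pow_left₀ hre_nonneg hre 2
  have him_sq := pow_le_pow_left₀ (by positivity) him' 2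
  rw [Complex.normSq_apply]
  rw [mul_pow, mul_pow, sq_abs] at *
  nlinarith

theorem inv_div_le_re_one_div {lam : ℂ} {C M d : ℝ} (hd : 0 < d) (hM : 0 < M)
    (hre : d ≤ M * lam.re) (hnorm : Complex.normSq lam ≤ C * d ^ 2) :
    C⁻¹ / (M * d) ≤ (1 / lam).re := by
  have hre_pos : 0 < lam.re := pos_of_mul_pos_right (hd.trans_le hre) hM.le
  have hnorm_pos : 0 < Complex.normSq lam :=
    Complex.normSq_pos.2 fun h => by simp [h] at hre_pos
  have hC : 0 < C := pos_of_mul_pos_left (hnorm_pos.trans_le hnorm) (sq_nonneg d)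
  rw [one_div, Complex.inv_re, div_le_div_iff₀ (by positivity) hnorm_pos, inv_mul_le_iff₀ hC]
  nlinarith

/-- the key geometric lemma giving `Re(1/λ) ≥ c/(M|1−s|)`. -/
theorem re_inv_lambda_lower_bound :
    ∃ c : ℝ, 0 < c ∧ ∀ M : ℝ, 1 ≤ M → ∀ z : ℂ,
      z ∈ {w : ℂ | ‖1 - w‖ ≤ M * (1 - ‖w‖)} \
          (({w : ℂ | ‖1 - w‖ ≤ M * (1 - ‖w‖)} ∩ {w : ℂ | w.re ≤ 0}) ∪
            Metric.closedBall (0 : ℂ) (1 / 2)) →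
      ∀ s : ℂ, s ∈ segment ℝ z 1 → s ≠ 1 →
        ∀ lam : ℂ, s = Complex.exp (-lam) → -(π / 2) ≤ lam.im → lam.im ≤ π / 2 →
          (1 / lam).re ≥ c / (M * ‖1 - s‖) := by
  refine ⟨25⁻¹, by norm_num, fun M hM z ⟨hzR, hzK⟩ s hseg hs1 lam hs him_lo him_hi => ?_⟩
  have hz_re : 0 < z.re := by
    by_contra h
    exact hzK (Or.inl ⟨hzR, not_lt.1 h⟩)
  have hz_norm : 1 / 2 < ‖z‖ := by
    by_contra h
    exact hzK (Or.inr (mem_closedBall_zero_iff.2 (not_lt.1 h)))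
  have hsR : ‖1 - s‖ ≤ M * (1 - ‖s‖) :=
    (convex_setOf_norm_sub_le_mul_one_sub_norm 1 (by linarith)).segment_subset hzR
      (by simp) hseg
  have hd : 0 < ‖1 - s‖ := norm_pos_iff.2 (sub_ne_zero.2 hs1.symm)
  have hs_le : ‖s‖ ≤ 1 := by nlinarith
  have hs_ge := one_fifth_le_norm_sq_of_mem_segment hz_re hz_norm hseg
  have hnorm := norm_sq_mul_normSq_le_of_eq_exp_neg hs hs_le (abs_le.2 ⟨him_lo, him_hi⟩)
  have hnorm' : Complex.normSq lam ≤ 25 * ‖1 - s‖ ^ 2 := by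
    have hpi : π ^ 2 ≤ 10 := by nlinarith [pi_lt_d2, pi_pos]
    nlinarith [mul_le_mul_of_nonneg_right hs_ge (Complex.normSq_nonneg lam),
      mul_le_mul_of_nonneg_right hpi (sq_nonneg ‖1 - s‖)]
  have hre : ‖1 - s‖ ≤ M * lam.re :=
    hsR.trans (mul_le_mul_of_nonneg_left (one_sub_norm_le_re_of_eq_exp_neg hs) (by linarith))
  exact inv_div_le_re_one_div hd (by linarith) hre hnorm'
end

section
/- There exist constants C, c > 0 such that there is a sequence (q_n) with q_n ∈ {−1,1} for which |ε Σ_{n=0}^∞ q_n (1−ε)^n| ≤ C √ε · e^{−π²/(24ε)} for all ε ∈ (0,1). -/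
open Real
set_option maxHeartbeats 1000000

noncomputable def qseq (n : ℕ) : ℝ := (-1 : ℝ) ^ (Nat.sqrt n)

lemma qseq_pm (n : ℕ) : qseq n = -1 ∨ qseq n = 1 := by
  unfold qseq
  rcases Nat.even_or_odd (Nat.sqrt n) with h | h
  · right; exact h.neg_one_pow
  · left; exact h.neg_one_pow

lemma abs_qseq (n : ℕ) : |qseq n| = 1 := by
  rcases qseq_pm n with h | h <;> rw [h] <;> norm_num

/-- if `n+1` is not a perfect square, `sqrt` doesn't change -/
lemma sqrt_succ_eq {n : ℕ} (h : ∀ m : ℕ, n + 1 ≠ (m + 1) ^ 2) :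
    Nat.sqrt (n + 1) = Nat.sqrt n := by
  by_contra hne
  have hle : Nat.sqrt n ≤ Nat.sqrt (n + 1) := Nat.sqrt_le_sqrt (Nat.le_succ n)
  have hlt : Nat.sqrt n < Nat.sqrt (n + 1) := lt_of_le_of_ne hle (Ne.symm hne)
  set s := Nat.sqrt (n + 1) with hs
  have hs1 : 1 ≤ s := Nat.lt_of_le_of_lt (Nat.zero_le _) hlt
  have h1 : s ^ 2 ≤ n + 1 := Nat.sqrt_le' _
  have h2 : n < s ^ 2 := Nat.sqrt_lt'.mp hlt
  have : n + 1 = s ^ 2 := le_antisymm h2 h1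
  exact h (s - 1) (by rwa [Nat.sub_add_cancel hs1])

lemma sqrt_at_sq (m : ℕ) : Nat.sqrt (m ^ 2 + 2 * m) = m :=
  Nat.sqrt_add_eq' m (by omega)

lemma qseq_diff_at_sq (m : ℕ) :
    qseq (m ^ 2 + 2 * m + 1) - qseq (m ^ 2 + 2 * m) = 2 * (-1 : ℝ) ^ (m + 1) := by
  unfold qseq
  have h1 : m ^ 2 + 2 * m + 1 = (m + 1) ^ 2 := by ring
  rw [h1, Nat.sqrt_eq', sqrt_at_sq, pow_succ]
  ring

lemma qseq_diff_zero {n : ℕ} (h : ∀ m : ℕ, n + 1 ≠ (m + 1) ^ 2) :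
    qseq (n + 1) - qseq n = 0 := by
  unfold qseq; rw [sqrt_succ_eq h]; ring

lemma summable_qx {x : ℝ} (h0 : 0 ≤ x) (h1 : x < 1) :
    Summable (fun n : ℕ => qseq n * x ^ n) := by
  apply Summable.of_abs
  have : (fun n : ℕ => |qseq n * x ^ n|) = fun n : ℕ => x ^ n := by
    funext n
    rw [abs_mul, abs_qseq, one_mul, abs_pow, abs_of_nonneg h0]
  rw [this]
  exact summable_geometric_of_lt_one h0 h1

lemma summable_pow_comp {x : ℝ} (h0 : 0 ≤ x) (h1 : x < 1) (g : ℕ → ℕ) (hg : ∀ n, n ≤ g n) :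
    Summable (fun n : ℕ => x ^ g n) := by
  apply Summable.of_nonneg_of_le (fun n => pow_nonneg h0 _)
    (fun n => pow_le_pow_of_le_one h0 h1.le (hg n))
  exact summable_geometric_of_lt_one h0 h1

lemma key_identity {x : ℝ} (h0 : 0 < x) (h1 : x < 1) :
    (1 - x) * ∑' n : ℕ, qseq n * x ^ n
      = 1 + 2 * ∑' m : ℕ, (-1 : ℝ) ^ (m + 1) * x ^ ((m + 1) ^ 2) := by
  have hs : Summable (fun n : ℕ => qseq n * x ^ n) := summable_qx h0.le h1
  have hs1 : Summable (fun n : ℕ => qseq (n + 1) * x ^ (n + 1)) :=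
    (summable_nat_add_iff 1).mpr hs
  have hs2 : Summable (fun n : ℕ => qseq n * x ^ (n + 1)) := by
    have := hs.mul_left x
    apply this.congr
    intro n; rw [pow_succ]; ring
  have hxS : x * ∑' n : ℕ, qseq n * x ^ n = ∑' n : ℕ, qseq n * x ^ (n + 1) := by
    rw [← tsum_mul_left]
    congr 1; funext n; rw [pow_succ]; ring
  have hzero : ∑' n : ℕ, qseq n * x ^ n
      = qseq 0 * x ^ 0 + ∑' n : ℕ, qseq (n + 1) * x ^ (n + 1) := Summable.tsum_eq_zero_add hs
  have hdiff : (1 - x) * ∑' n : ℕ, qseq n * x ^ n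
      = 1 + ∑' n : ℕ, (qseq (n + 1) - qseq n) * x ^ (n + 1) := by
    rw [sub_mul, one_mul, hxS, hzero]
    have : ∑' n : ℕ, (qseq (n + 1) - qseq n) * x ^ (n + 1)
        = (∑' n : ℕ, qseq (n + 1) * x ^ (n + 1)) - ∑' n : ℕ, qseq n * x ^ (n + 1) := by
      rw [← Summable.tsum_sub hs1 hs2]
      congr 1; funext n; ring
    rw [this]
    have hq0 : qseq 0 = 1 := by unfold qseq; norm_num
    rw [hq0]; ring
  rw [hdiff]
  congr 1
  -- reindex: support of the summand is contained in range of m ↦ m^2 + 2m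
  have hmono : StrictMono (fun m : ℕ => m ^ 2 + 2 * m) := by
    intro a b h
    simp only
    have : a ^ 2 < b ^ 2 := Nat.pow_lt_pow_left h (by norm_num)
    omega
  have hinj := hmono.injective
  have hsupp : Function.support (fun n : ℕ => (qseq (n + 1) - qseq n) * x ^ (n + 1))
      ⊆ Set.range (fun m : ℕ => m ^ 2 + 2 * m) := by
    intro n hn
    simp only [Function.mem_support] at hn
    by_contra hmem
    apply hn
    have h : ∀ m : ℕ, n + 1 ≠ (m + 1) ^ 2 := by
      intro m hm
      have h2 : (m + 1) ^ 2 = m ^ 2 + 2 * m + 1 := by ring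
      exact hmem ⟨m, show m ^ 2 + 2 * m = n by omega⟩
    rw [qseq_diff_zero h]; ring
  have := Function.Injective.tsum_eq hinj hsupp
  rw [← this, ← tsum_mul_left]
  congr 1; funext m
  show (qseq (m ^ 2 + 2 * m + 1) - qseq (m ^ 2 + 2 * m)) * x ^ (m ^ 2 + 2 * m + 1)
      = 2 * ((-1 : ℝ) ^ (m + 1) * x ^ ((m + 1) ^ 2))
  rw [qseq_diff_at_sq]
  have h3 : m ^ 2 + 2 * m + 1 = (m + 1) ^ 2 := by ring
  rw [h3]
  ring

-- summability of ℤ-Gaussian sums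
lemma summable_gauss_nat {c : ℝ} (hc : 0 < c) (j : ℕ) :
    Summable (fun n : ℕ => Real.exp (-c * ((n : ℝ) + j) ^ 2)) := by
  have hlt : Real.exp (-c) < 1 := Real.exp_lt_one_iff.mpr (by linarith)
  apply Summable.of_nonneg_of_le (fun n => (Real.exp_pos _).le)
    (fun n => ?_) (summable_geometric_of_lt_one (Real.exp_pos _).le hlt)
  rw [← Real.exp_nat_mul]
  apply Real.exp_le_exp.mpr
  have hnat : (n : ℝ) ≤ ((n : ℝ) + j) ^ 2 := by
    have h : n ≤ (n + j) ^ 2 :=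
      le_trans (Nat.le_add_right _ _) (Nat.le_self_pow two_ne_zero _)
    have := (Nat.cast_le (α := ℝ)).mpr h
    push_cast at this
    linarith
  nlinarith [mul_le_mul_of_nonneg_left hnat hc.le]

lemma summable_gauss_int {c : ℝ} (hc : 0 < c) :
    Summable (fun k : ℤ => Real.exp (-c * (k : ℝ) ^ 2)) := by
  apply Summable.of_nat_of_neg_add_one
  · have := summable_gauss_nat hc 0
    apply this.congr; intro n; congr 1; push_cast; ring
  · have := summable_gauss_nat hc 1
    apply this.congr; intro n; congr 1; push_cast; ring

lemma gauss_int_split {c : ℝ} (hc : 0 < c) :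
    ∑' k : ℤ, Real.exp (-c * (k : ℝ) ^ 2)
      = 1 + 2 * ∑' n : ℕ, Real.exp (-c * ((n : ℝ) + 1) ^ 2) := by
  have hA : Summable (fun n : ℕ => Real.exp (-c * (((n : ℤ) : ℝ)) ^ 2)) := by
    have := summable_gauss_nat hc 0
    apply this.congr; intro n; congr 1; push_cast; ring
  have hB : Summable (fun n : ℕ => Real.exp (-c * (((-((n : ℤ) + 1)) : ℤ) : ℝ) ^ 2)) := by
    have := summable_gauss_nat hc 1
    apply this.congr; intro n; congr 1; push_cast; ring
  rw [tsum_of_nat_of_neg_add_one (f := fun k : ℤ => Real.exp (-c * (k : ℝ) ^ 2)) hA hB]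
  have e1 : ∑' n : ℕ, Real.exp (-c * (((n : ℤ) : ℝ)) ^ 2)
      = 1 + ∑' n : ℕ, Real.exp (-c * ((n : ℝ) + 1) ^ 2) := by
    rw [Summable.tsum_eq_zero_add hA]
    have h0 : Real.exp (-c * ((((0:ℕ) : ℤ)) : ℝ) ^ 2) = 1 := by norm_num
    rw [h0]
    congr 1
    apply tsum_congr; intro n; congr 2; push_cast; ring
  have e2 : ∑' n : ℕ, Real.exp (-c * (((-((n : ℤ) + 1)) : ℤ) : ℝ) ^ 2)
      = ∑' n : ℕ, Real.exp (-c * ((n : ℝ) + 1) ^ 2) := by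
    apply tsum_congr; intro n; congr 2; push_cast; ring
  rw [e1, e2]; ring

lemma poisson_real {c : ℝ} (hc : 0 < c) :
    ∑' k : ℤ, Real.exp (-c * (k : ℝ) ^ 2)
      = Real.sqrt π / Real.sqrt c * ∑' k : ℤ, Real.exp (-(π ^ 2 / c) * (k : ℝ) ^ 2) := by
  have hpi := Real.pi_pos
  have ha : 0 < c / π := div_pos hc hpi
  have h := Real.tsum_exp_neg_mul_int_sq ha
  have e1 : ∀ k : ℤ, -π * (c / π) * (k : ℝ) ^ 2 = -c * (k : ℝ) ^ 2 := by
    intro k; field_simp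
  have e2 : ∀ k : ℤ, -π / (c / π) * (k : ℝ) ^ 2 = -(π ^ 2 / c) * (k : ℝ) ^ 2 := by
    intro k; rw [div_div_eq_mul_div, div_mul_eq_mul_div]; ring_nf
  rw [show ∑' k : ℤ, Real.exp (-c * (k : ℝ) ^ 2)
      = ∑' k : ℤ, Real.exp (-π * (c / π) * (k : ℝ) ^ 2) from
    tsum_congr fun k => by rw [e1], h]
  congr 1
  · rw [← Real.sqrt_eq_rpow, Real.sqrt_div hc.le, one_div_div]
  · exact tsum_congr fun k => by rw [e2]

lemma sqrt_four : Real.sqrt 4 = 2 := by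
  rw [show (4 : ℝ) = 2 ^ 2 by norm_num, Real.sqrt_sq (by norm_num)]

lemma theta_diff_eq {t : ℝ} (ht : 0 < t) :
    2 * (∑' k : ℤ, Real.exp (-(4 * t) * (k : ℝ) ^ 2))
        - ∑' k : ℤ, Real.exp (-t * (k : ℝ) ^ 2)
      = Real.sqrt π / Real.sqrt t *
        ((∑' k : ℤ, Real.exp (-(π ^ 2 / (4 * t)) * (k : ℝ) ^ 2))
          - ∑' k : ℤ, Real.exp (-(π ^ 2 / t) * (k : ℝ) ^ 2)) := by
  rw [poisson_real (by linarith : (0:ℝ) < 4 * t), poisson_real ht]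
  have h4 : Real.sqrt (4 * t) = 2 * Real.sqrt t := by
    rw [Real.sqrt_mul (by norm_num : (0:ℝ) ≤ 4), sqrt_four]
  rw [h4]
  have hst : Real.sqrt t ≠ 0 := ne_of_gt (Real.sqrt_pos.mpr ht)
  field_simp

lemma S_diff_bound {c : ℝ} (hc : 0 < c) :
    (∑' k : ℤ, Real.exp (-c * (k : ℝ) ^ 2)) - (∑' k : ℤ, Real.exp (-(4 * c) * (k : ℝ) ^ 2))
      ∈ Set.Icc (0 : ℝ) (2 * (Real.exp (-c) * (1 - Real.exp (-c))⁻¹)) := by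
  have h4c : (0:ℝ) < 4 * c := by linarith
  have hs1 := summable_gauss_int hc
  have hs4 := summable_gauss_int h4c
  constructor
  · have : (∑' k : ℤ, Real.exp (-(4 * c) * (k : ℝ) ^ 2))
        ≤ ∑' k : ℤ, Real.exp (-c * (k : ℝ) ^ 2) := by
      apply Summable.tsum_le_tsum _ hs4 hs1
      intro k
      apply Real.exp_le_exp.mpr
      nlinarith [sq_nonneg ((k : ℝ))]
    linarith
  · -- upper bound
    have hr0 : 0 < Real.exp (-c) := Real.exp_pos _
    have hr1 : Real.exp (-c) < 1 := Real.exp_lt_one_iff.mpr (by linarith)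
    have hsplit1 := gauss_int_split hc
    have hsplit4 := gauss_int_split h4c
    rw [hsplit1, hsplit4]
    have hb4 : (0:ℝ) ≤ ∑' n : ℕ, Real.exp (-(4 * c) * ((n : ℝ) + 1) ^ 2) :=
      tsum_nonneg fun n => (Real.exp_pos _).le
    have hb1 : (∑' n : ℕ, Real.exp (-c * ((n : ℝ) + 1) ^ 2))
        ≤ Real.exp (-c) * (1 - Real.exp (-c))⁻¹ := by
      have hgeo : Summable (fun n : ℕ => Real.exp (-c) ^ (n + 1)) := by
        apply (summable_geometric_of_lt_one hr0.le hr1).comp_injective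
          (add_left_injective 1)
      have hle : ∀ n : ℕ, Real.exp (-c * ((n : ℝ) + 1) ^ 2) ≤ Real.exp (-c) ^ (n + 1) := by
        intro n
        have e : Real.exp (-c * ((n : ℝ) + 1) ^ 2) = Real.exp (-c) ^ ((n + 1) ^ 2) := by
          rw [← Real.exp_nat_mul]
          congr 1
          push_cast
          ring
        rw [e]
        apply pow_le_pow_of_le_one hr0.le hr1.le
        nlinarith [Nat.one_le_iff_ne_zero.mpr (Nat.succ_ne_zero n)]
      calc (∑' n : ℕ, Real.exp (-c * ((n : ℝ) + 1) ^ 2))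
          ≤ ∑' n : ℕ, Real.exp (-c) ^ (n + 1) :=
            Summable.tsum_le_tsum hle (by simpa using summable_gauss_nat hc 1) hgeo
        _ = Real.exp (-c) * (1 - Real.exp (-c))⁻¹ := by
            have : (fun n : ℕ => Real.exp (-c) ^ (n + 1))
                = fun n : ℕ => Real.exp (-c) * Real.exp (-c) ^ n := by
              funext n; rw [pow_succ]; ring
            rw [this, tsum_mul_left, tsum_geometric_of_lt_one hr0.le hr1]
    linarith

lemma bridge {t : ℝ} (ht : 0 < t) :
    1 + 2 * ∑' m : ℕ, (-1 : ℝ) ^ (m + 1) * (Real.exp (-t)) ^ ((m + 1) ^ 2)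
      = 2 * (∑' k : ℤ, Real.exp (-(4 * t) * (k : ℝ) ^ 2))
        - ∑' k : ℤ, Real.exp (-t * (k : ℝ) ^ 2) := by
  set x := Real.exp (-t) with hxdef
  have hx0 : 0 < x := Real.exp_pos _
  have hx1 : x < 1 := Real.exp_lt_one_iff.mpr (by linarith)
  have hsa : Summable (fun k : ℕ => x ^ ((2 * k + 1) ^ 2)) :=
    summable_pow_comp hx0.le hx1 _ (fun n => by nlinarith)
  have hsb : Summable (fun k : ℕ => x ^ ((2 * k + 2) ^ 2)) :=
    summable_pow_comp hx0.le hx1 _ (fun n => by nlinarith)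
  have hsc : Summable (fun k : ℕ => x ^ ((k + 1) ^ 2)) :=
    summable_pow_comp hx0.le hx1 _ (fun n => by nlinarith)
  set a := ∑' k : ℕ, x ^ ((2 * k + 1) ^ 2) with ha
  set b := ∑' k : ℕ, x ^ ((2 * k + 2) ^ 2) with hb
  -- step 1 : signed sum = b - a
  have h1 : ∑' m : ℕ, (-1 : ℝ) ^ (m + 1) * x ^ ((m + 1) ^ 2) = b - a := by
    have he : Summable (fun k : ℕ => (-1 : ℝ) ^ (2 * k + 1) * x ^ ((2 * k + 1) ^ 2)) := by
      apply hsa.neg.congr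
      intro n
      simp [pow_add, pow_mul]
    have ho : Summable (fun k : ℕ => (-1 : ℝ) ^ (2 * k + 1 + 1) * x ^ ((2 * k + 1 + 1) ^ 2)) := by
      apply hsb.congr
      intro n
      simp [pow_add, pow_mul]
    rw [← tsum_even_add_odd (f := fun m : ℕ => (-1 : ℝ) ^ (m + 1) * x ^ ((m + 1) ^ 2)) he ho]
    have e1 : ∑' k : ℕ, (-1 : ℝ) ^ (2 * k + 1) * x ^ ((2 * k + 1) ^ 2) = -a := by
      rw [ha, ← tsum_neg]
      apply tsum_congr; intro k
      simp [pow_add, pow_mul]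
    have e2 : ∑' k : ℕ, (-1 : ℝ) ^ (2 * k + 1 + 1) * x ^ ((2 * k + 1 + 1) ^ 2) = b := by
      rw [hb]
      apply tsum_congr; intro k
      have : 2 * k + 1 + 1 = 2 * k + 2 := by ring
      rw [this]
      simp [pow_add, pow_mul]
    rw [e1, e2]; ring
  -- step 2 : A = 1 + 2 b
  have h2 : ∑' k : ℤ, Real.exp (-(4 * t) * (k : ℝ) ^ 2) = 1 + 2 * b := by
    rw [gauss_int_split (by linarith : (0:ℝ) < 4 * t)]
    congr 2
    rw [hb]
    apply tsum_congr; intro n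
    rw [hxdef, ← Real.exp_nat_mul]
    congr 1
    push_cast
    ring
  -- step 3 : B = 1 + 2 (a + b)
  have h3 : ∑' k : ℤ, Real.exp (-t * (k : ℝ) ^ 2) = 1 + 2 * (a + b) := by
    rw [gauss_int_split ht]
    congr 2
    have hc : ∑' n : ℕ, Real.exp (-t * ((n : ℝ) + 1) ^ 2) = ∑' n : ℕ, x ^ ((n + 1) ^ 2) := by
      apply tsum_congr; intro n
      rw [hxdef, ← Real.exp_nat_mul]
      congr 1
      push_cast
      ring
    rw [hc]
    have hgee : Summable (fun k : ℕ => x ^ ((2 * k + 1) ^ 2)) := hsa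
    rw [← tsum_even_add_odd (f := fun n : ℕ => x ^ ((n + 1) ^ 2))
      (by apply hsa.congr; intro n; ring_nf)
      (by apply hsb.congr; intro n; ring_nf)]
  rw [h1, h2, h3]; ring

lemma main_small {ε : ℝ} (h0 : 0 < ε) (h2 : ε ≤ 1/2) :
    |ε * ∑' n : ℕ, qseq n * (1 - ε) ^ n| ≤ 100 * Real.sqrt ε * Real.exp (-π ^ 2 / (24 * ε)) := by
  have hπ := Real.pi_gt_three
  have hπ2 : (9:ℝ) ≤ π ^ 2 := by nlinarith
  have hx0 : (0:ℝ) < 1 - ε := by linarith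
  have hx1 : 1 - ε < 1 := by linarith
  set t := -Real.log (1 - ε) with htdef
  have ht : 0 < t := by
    have := Real.log_neg hx0 hx1
    rw [htdef]; linarith
  have hxe : Real.exp (-t) = 1 - ε := by
    rw [htdef, neg_neg, Real.exp_log hx0]
  have htl : ε ≤ t := by
    have ha : 1 - ε ≤ Real.exp (-ε) := by nlinarith [Real.add_one_le_exp (-ε)]
    have hb : Real.log (1 - ε) ≤ -ε := (Real.log_le_iff_le_exp hx0).mpr ha
    rw [htdef]; linarith
  have htu : t ≤ 2 * ε := by
    have hmul : Real.exp (-(2*ε)) * Real.exp (2*ε) = 1 := by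
      rw [← Real.exp_add]; norm_num
    have he : Real.exp (-(2*ε)) ≤ 1 - ε := by
      nlinarith [Real.add_one_le_exp (2*ε), Real.exp_pos (-(2*ε))]
    have := (Real.le_log_iff_exp_le hx0).mpr he
    rw [htdef]; linarith
  -- identity
  have hkey := key_identity hx0 hx1
  have hone : (1 : ℝ) - (1 - ε) = ε := by ring
  rw [hone] at hkey
  have hbridge := bridge ht
  rw [hxe] at hbridge
  have hA := theta_diff_eq ht
  have hmain : ε * ∑' n : ℕ, qseq n * (1 - ε) ^ n
      = Real.sqrt π / Real.sqrt t *
        ((∑' k : ℤ, Real.exp (-(π ^ 2 / (4 * t)) * (k : ℝ) ^ 2))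
          - ∑' k : ℤ, Real.exp (-(π ^ 2 / t) * (k : ℝ) ^ 2)) :=
    hkey.trans (hbridge.trans hA)
  have hc4 : (0:ℝ) < π ^ 2 / (4 * t) := by positivity
  have h41 : ∑' k : ℤ, Real.exp (-(π ^ 2 / t) * (k : ℝ) ^ 2)
      = ∑' k : ℤ, Real.exp (-(4 * (π ^ 2 / (4 * t))) * (k : ℝ) ^ 2) := by
    apply tsum_congr; intro k
    congr 2
    field_simp
  rw [h41] at hmain
  obtain ⟨hd0, hdu⟩ := S_diff_bound hc4
  set r := Real.exp (-(π ^ 2 / (4 * t))) with hrdef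
  have hrpos : 0 < r := Real.exp_pos _
  have hrhalf : r ≤ 1/2 := by
    have hcge : (2:ℝ) ≤ π ^ 2 / (4 * t) := by
      rw [le_div_iff₀ (by positivity)]
      nlinarith
    have hm2 : Real.exp (-(2:ℝ)) * Real.exp 2 = 1 := by
      rw [← Real.exp_add]; norm_num
    have he2 : Real.exp (-(2:ℝ)) ≤ 1/2 := by
      nlinarith [Real.add_one_le_exp (2:ℝ), Real.exp_pos (-(2:ℝ))]
    calc r ≤ Real.exp (-(2:ℝ)) := Real.exp_le_exp.mpr (by linarith)
      _ ≤ 1/2 := he2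
  have hinv2 : (1 - r)⁻¹ ≤ 2 := by
    have h1rpos : (0:ℝ) < 1 - r := by linarith
    rw [inv_le_comm₀ h1rpos (by norm_num)]
    linarith
  have hP0 : (0:ℝ) ≤ Real.sqrt π / Real.sqrt t := by positivity
  have habs : |ε * ∑' n : ℕ, qseq n * (1 - ε) ^ n|
      ≤ Real.sqrt π / Real.sqrt t * (4 * r) := by
    rw [hmain, abs_of_nonneg (mul_nonneg hP0 hd0)]
    apply mul_le_mul_of_nonneg_left _ hP0
    calc _ ≤ 2 * (r * (1 - r)⁻¹) := hdu
      _ ≤ 2 * (r * 2) := by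
          apply mul_le_mul_of_nonneg_left _ (by norm_num)
          exact mul_le_mul_of_nonneg_left hinv2 hrpos.le
      _ = 4 * r := by ring
  -- now estimate
  have hr8 : r ≤ Real.exp (-(π ^ 2 / (8 * ε))) := by
    apply Real.exp_le_exp.mpr
    have : π ^ 2 / (8 * ε) ≤ π ^ 2 / (4 * t) := by
      rw [div_le_div_iff₀ (by positivity) (by positivity)]
      nlinarith
    linarith
  have hPe : Real.sqrt π / Real.sqrt t ≤ Real.sqrt π / Real.sqrt ε := by
    gcongr
  have hsplit : Real.exp (-(π ^ 2 / (8 * ε)))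
      = Real.exp (-(π ^ 2 / (12 * ε))) * Real.exp (-π ^ 2 / (24 * ε)) := by
    rw [← Real.exp_add]
    congr 1
    field_simp
    ring
  have h12 : Real.exp (-(π ^ 2 / (12 * ε))) ≤ 2 * ε := by
    set e := Real.exp (-(π ^ 2 / (12 * ε))) with hedef
    have hepos : 0 < e := Real.exp_pos _
    have hmul : e * Real.exp (π ^ 2 / (12 * ε)) = 1 := by
      rw [hedef, ← Real.exp_add]; norm_num
    have hge : π ^ 2 / (12 * ε) ≤ Real.exp (π ^ 2 / (12 * ε)) := by
      nlinarith [Real.add_one_le_exp (π ^ 2 / (12 * ε))]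
    have k1 : e * (π ^ 2 / (12 * ε)) ≤ 1 := by
      calc e * (π ^ 2 / (12 * ε)) ≤ e * Real.exp (π ^ 2 / (12 * ε)) :=
            mul_le_mul_of_nonneg_left hge hepos.le
        _ = 1 := hmul
    have hce : π ^ 2 / (12 * ε) * ε = π ^ 2 / 12 := by field_simp
    have k4 : e * (π ^ 2 / (12 * ε)) * ε ≤ ε := by
      nlinarith [mul_le_mul_of_nonneg_right k1 h0.le]
    have k5 : e * (π ^ 2 / (12 * ε)) * ε = e * (π ^ 2 / 12) := by
      rw [mul_assoc, hce]
    have k6 : e * 9 ≤ e * π ^ 2 := mul_le_mul_of_nonneg_left hπ2 hepos.le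
    nlinarith [k4, k5, k6]
  have hsπ : Real.sqrt π ≤ 2 := by
    rw [show (2:ℝ) = Real.sqrt 4 from sqrt_four.symm]
    exact Real.sqrt_le_sqrt Real.pi_le_four
  have hsε : 0 < Real.sqrt ε := Real.sqrt_pos.mpr h0
  have hexp24 : 0 < Real.exp (-π ^ 2 / (24 * ε)) := Real.exp_pos _
  calc |ε * ∑' n : ℕ, qseq n * (1 - ε) ^ n|
      ≤ Real.sqrt π / Real.sqrt t * (4 * r) := habs
    _ ≤ Real.sqrt π / Real.sqrt ε * (4 * Real.exp (-(π ^ 2 / (8 * ε)))) := by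
        apply mul_le_mul hPe (by linarith) (by positivity) (by positivity)
    _ = Real.sqrt π / Real.sqrt ε *
          (4 * (Real.exp (-(π ^ 2 / (12 * ε))) * Real.exp (-π ^ 2 / (24 * ε)))) := by
        rw [hsplit]
    _ ≤ Real.sqrt π / Real.sqrt ε * (4 * (2 * ε * Real.exp (-π ^ 2 / (24 * ε)))) := by
        apply mul_le_mul_of_nonneg_left _ (by positivity)
        apply mul_le_mul_of_nonneg_left _ (by norm_num)
        exact mul_le_mul_of_nonneg_right h12 hexp24.le
    _ = 8 * Real.sqrt π * (ε / Real.sqrt ε) * Real.exp (-π ^ 2 / (24 * ε)) := by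
        ring
    _ = 8 * Real.sqrt π * Real.sqrt ε * Real.exp (-π ^ 2 / (24 * ε)) := by
        rw [Real.div_sqrt]
    _ ≤ 100 * Real.sqrt ε * Real.exp (-π ^ 2 / (24 * ε)) := by
        nlinarith [mul_le_mul_of_nonneg_right hsπ (mul_nonneg hsε.le hexp24.le),
          mul_pos hsε hexp24]

/-- a fair-duel ordering with bias `O(√ε e^{−π²/(24ε)})`. -/
theorem fair_duel :
    ∃ C : ℝ, 0 < C ∧ ∃ q : ℕ → ℝ, (∀ n, q n = -1 ∨ q n = 1) ∧
      ∀ ε : ℝ, ε ∈ Set.Ioo (0 : ℝ) 1 →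
        |ε * ∑' n : ℕ, q n * (1 - ε) ^ n| ≤
          C * Real.sqrt ε * Real.exp (-π ^ 2 / (24 * ε)) := by
  refine ⟨100, by norm_num, qseq, qseq_pm, ?_⟩
  rintro ε ⟨h0, h1⟩
  by_cases h2 : ε ≤ 1/2
  · exact main_small h0 h2
  · push_neg at h2
    have hx0 : (0:ℝ) ≤ 1 - ε := by linarith
    have hx1 : 1 - ε < 1 := by linarith
    have hgeo := summable_geometric_of_lt_one hx0 hx1
    have hnorm : Summable (fun n : ℕ => ‖qseq n * (1 - ε) ^ n‖) := by
      apply hgeo.congr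
      intro n
      rw [Real.norm_eq_abs, abs_mul, abs_qseq, one_mul, abs_pow, abs_of_nonneg hx0]
    have habs : |∑' n : ℕ, qseq n * (1 - ε) ^ n| ≤ ε⁻¹ := by
      calc |∑' n : ℕ, qseq n * (1 - ε) ^ n| ≤ ∑' n : ℕ, ‖qseq n * (1 - ε) ^ n‖ := by
            rw [← Real.norm_eq_abs]
            exact norm_tsum_le_tsum_norm hnorm
        _ = ∑' n : ℕ, (1 - ε) ^ n := by
            apply tsum_congr; intro n
            rw [Real.norm_eq_abs, abs_mul, abs_qseq, one_mul, abs_pow, abs_of_nonneg hx0]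
        _ = (1 - (1 - ε))⁻¹ := tsum_geometric_of_lt_one hx0 hx1
        _ = ε⁻¹ := by norm_num
    have hLHS : |ε * ∑' n : ℕ, qseq n * (1 - ε) ^ n| ≤ 1 := by
      rw [abs_mul, abs_of_nonneg h0.le]
      calc ε * |∑' n : ℕ, qseq n * (1 - ε) ^ n| ≤ ε * ε⁻¹ :=
            mul_le_mul_of_nonneg_left habs h0.le
        _ = 1 := mul_inv_cancel₀ (ne_of_gt h0)
    -- RHS is at least 1
    have hsq : (1/2 : ℝ) ≤ Real.sqrt ε := by
      rw [show (1/2 : ℝ) = Real.sqrt (1/4) by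
        rw [show (1/4 : ℝ) = (1/2)^2 by norm_num, Real.sqrt_sq (by norm_num)]]
      apply Real.sqrt_le_sqrt
      linarith
    have hπ : π < 3.15 := Real.pi_lt_d2
    have hπ0 := Real.pi_pos
    have hexp : Real.exp (-1 : ℝ) ≤ Real.exp (-π ^ 2 / (24 * ε)) := by
      apply Real.exp_le_exp.mpr
      rw [neg_div, neg_le_neg_iff, div_le_one (by linarith)]
      nlinarith
    have he1 : (1/4 : ℝ) ≤ Real.exp (-1 : ℝ) := by
      have hm : Real.exp (-1 : ℝ) * Real.exp 1 = 1 := by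
        rw [← Real.exp_add]; norm_num
      nlinarith [Real.exp_one_lt_d9, Real.exp_pos (-1 : ℝ)]
    calc |ε * ∑' n : ℕ, qseq n * (1 - ε) ^ n| ≤ 1 := hLHS
      _ ≤ 100 * (1/2) * (1/4) := by norm_num
      _ ≤ 100 * Real.sqrt ε * Real.exp (-π ^ 2 / (24 * ε)) := by
          apply mul_le_mul _ (le_trans he1 hexp) (by norm_num) (by positivity)
          nlinarith
end

section
/- Let B_TM(ε) = ε Π_{n=0}^∞ (1 − (1−ε)^{2^n}) for ε ∈ (0,1). Then there is a constant c > 0 such that B_TM(ε) ≥ e^{−c (log ε)²} for all sufficiently small ε > 0. -/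
/-!
Every factor `1 - (1 - ε) ^ 2 ^ n` is at least `ε`. Once `2 ^ N * ε ≥ 1`, the factors approach `1`
doubly exponentially fast: writing `q = (1 - ε) ^ 2 ^ N ≤ e⁻¹ < 1/2`, the `(N + k)`-th factor is
`1 - q ^ 2 ^ k ≥ 1 - 2⁻⁽ᵏ⁺¹⁾`, and `log (1 - x) ≥ -2x` for `x ≤ 1/2` bounds the tail of the product
below by `e⁻²`. Hence `B_TM(ε) ≥ ε ^ (N + 1) e⁻²`, and the least such `N` is `O(log (1/ε))`.
-/

open Real

lemma Real.neg_two_mul_le_log_one_sub {x : ℝ} (h0 : 0 ≤ x) (h1 : x ≤ 1 / 2) :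
    -2 * x ≤ log (1 - x) := by
  have hpos : 0 < 1 - x := by linarith
  refine le_trans ?_ (one_sub_inv_le_log_of_pos hpos)
  rw [le_sub_iff_add_le, ← le_sub_iff_add_le', inv_le_iff_one_le_mul₀ hpos]
  nlinarith

lemma Real.exp_neg_two_mul_tsum_le_tprod_one_sub {ι : Type*} {x : ι → ℝ} (h0 : ∀ i, 0 ≤ x i)
    (h1 : ∀ i, x i ≤ 1 / 2) (hx : Summable x) :
    exp (-2 * ∑' i, x i) ≤ ∏' i, (1 - x i) := by
  have hlog : Summable fun i ↦ log (1 - x i) := by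
    simpa only [← sub_eq_add_neg] using Real.summable_log_one_add_of_summable hx.neg
  rw [← rexp_tsum_eq_tprod (fun i ↦ by linarith [h1 i]) hlog, exp_le_exp, ← tsum_mul_left]
  exact (hx.mul_left _).tsum_le_tsum (fun i ↦ neg_two_mul_le_log_one_sub (h0 i) (h1 i)) hlog

lemma Real.multipliable_one_sub_of_summable {ι : Type*} {x : ι → ℝ} (hx : Summable x) :
    Multipliable fun i ↦ 1 - x i := by
  simpa only [← sub_eq_add_neg] using Real.multipliable_one_add_of_summable hx.neg

section DoublyExponential

variable {q : ℝ}

lemma pow_two_pow_le_half_pow_succ (hq0 : 0 ≤ q) (hq : q ≤ 1 / 2) (n : ℕ) :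
    q ^ 2 ^ n ≤ (1 / 2) ^ (n + 1) :=
  calc q ^ 2 ^ n ≤ q ^ (n + 1) := pow_le_pow_of_le_one hq0 (by linarith) Nat.lt_two_pow_self
    _ ≤ (1 / 2) ^ (n + 1) := by gcongr

lemma summable_pow_two_pow (hq0 : 0 ≤ q) (hq : q ≤ 1 / 2) : Summable fun n : ℕ ↦ q ^ 2 ^ n :=
  (summable_geometric_two.mul_right (1 / 2)).of_nonneg_of_le (fun n ↦ by positivity)
    fun n ↦ by simpa only [pow_succ] using pow_two_pow_le_half_pow_succ hq0 hq n

lemma tsum_pow_two_pow_le_one (hq0 : 0 ≤ q) (hq : q ≤ 1 / 2) : ∑' n : ℕ, q ^ 2 ^ n ≤ 1 :=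
  calc ∑' n : ℕ, q ^ 2 ^ n ≤ ∑' n : ℕ, (1 / 2 : ℝ) ^ n * (1 / 2) :=
        (summable_pow_two_pow hq0 hq).tsum_le_tsum
          (fun n ↦ by simpa only [pow_succ] using pow_two_pow_le_half_pow_succ hq0 hq n)
          (summable_geometric_two.mul_right _)
    _ = 1 := by rw [tsum_mul_right, tsum_geometric_two]; norm_num

lemma exp_neg_two_le_tprod_one_sub_pow_two_pow (hq0 : 0 ≤ q) (hq : q ≤ 1 / 2) :
    exp (-2) ≤ ∏' n : ℕ, (1 - q ^ 2 ^ n) :=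
  calc exp (-2) ≤ exp (-2 * ∑' n : ℕ, q ^ 2 ^ n) := by
        gcongr; linarith [tsum_pow_two_pow_le_one hq0 hq]
    _ ≤ ∏' n : ℕ, (1 - q ^ 2 ^ n) :=
        exp_neg_two_mul_tsum_le_tprod_one_sub (fun n ↦ by positivity)
          (fun n ↦ (pow_le_of_le_one hq0 (by linarith) (by positivity)).trans hq)
          (summable_pow_two_pow hq0 hq)

end DoublyExponential

section ThueMorseBias

variable {ε : ℝ}

lemma one_sub_pow_two_pow_le_half (hε1 : ε ≤ 1) {N : ℕ} (hN : 1 ≤ 2 ^ N * ε) :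
    (1 - ε) ^ 2 ^ N ≤ 1 / 2 := by
  have hle : 2 ^ N * ε ≤ ((2 ^ N : ℕ) : ℝ) := by
    push_cast; exact mul_le_of_le_one_right (by positivity) hε1
  calc (1 - ε) ^ 2 ^ N = (1 - 2 ^ N * ε / ((2 ^ N : ℕ) : ℝ)) ^ 2 ^ N := by
        push_cast; field_simp
    _ ≤ exp (-(2 ^ N * ε)) := one_sub_div_pow_le_exp_neg hle
    _ ≤ exp (-1) := by gcongr
    _ ≤ 1 / 2 := exp_neg_one_lt_half.le

lemma le_one_sub_one_sub_pow_two_pow (hε0 : 0 ≤ ε) (hε1 : ε ≤ 1) (n : ℕ) :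
    ε ≤ 1 - (1 - ε) ^ 2 ^ n := by
  linarith [pow_le_of_le_one (sub_nonneg.2 hε1) (by linarith) (pow_ne_zero n two_ne_zero)]

lemma pow_succ_mul_exp_neg_two_le_thueMorse_bias (hε0 : 0 < ε) (hε1 : ε ≤ 1) {N : ℕ}
    (hN : 1 ≤ 2 ^ N * ε) :
    ε ^ (N + 1) * exp (-2) ≤ ε * ∏' n : ℕ, (1 - (1 - ε) ^ 2 ^ n) := by
  set q := (1 - ε) ^ 2 ^ N
  have hq0 : 0 ≤ q := pow_nonneg (by linarith) _
  have hq : q ≤ 1 / 2 := one_sub_pow_two_pow_le_half hε1 hN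
  have htail : (fun n : ℕ ↦ 1 - (1 - ε) ^ 2 ^ (n + N)) = fun n ↦ 1 - q ^ 2 ^ n := by
    ext n; rw [pow_add, mul_comm, pow_mul]
  have hsplit : ∏' n : ℕ, (1 - (1 - ε) ^ 2 ^ n)
      = (∏ n ∈ Finset.range N, (1 - (1 - ε) ^ 2 ^ n)) * ∏' n : ℕ, (1 - q ^ 2 ^ n) := by
    refine HasProd.tprod_eq (HasProd.prod_range_mul ?_)
    rw [htail]
    exact (multipliable_one_sub_of_summable (summable_pow_two_pow hq0 hq)).hasProd
  have hhead : ε ^ N ≤ ∏ n ∈ Finset.range N, (1 - (1 - ε) ^ 2 ^ n) := by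
    simpa using Finset.prod_le_prod (s := Finset.range N) (fun _ _ ↦ hε0.le)
      fun n _ ↦ le_one_sub_one_sub_pow_two_pow hε0.le hε1 n
  rw [hsplit, pow_succ', mul_assoc]
  exact mul_le_mul_of_nonneg_left
    (mul_le_mul hhead (exp_neg_two_le_tprod_one_sub_pow_two_pow hq0 hq) (exp_pos _).le
      ((pow_nonneg hε0.le N).trans hhead)) hε0.le

lemma exists_one_le_two_pow_mul_and_le_one_sub_two_mul_log (hε0 : 0 < ε) (hε1 : ε ≤ 1) :
    ∃ N : ℕ, 1 ≤ 2 ^ N * ε ∧ (N : ℝ) ≤ 1 - 2 * log ε := by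
  obtain ⟨n, hn, hn'⟩ := exists_nat_pow_near (one_le_one_div hε0 hε1) one_lt_two
  refine ⟨n + 1, ((div_lt_iff₀ hε0).1 hn').le, ?_⟩
  have hlog : n * log 2 ≤ -log ε := by
    simpa [log_div, log_pow] using log_le_log (by positivity) hn
  have : (n : ℝ) ≤ -2 * log ε := by nlinarith [log_two_gt_d9, Nat.cast_nonneg (α := ℝ) n]
  push_cast
  linarith

end ThueMorseBias

/-- lower bound for the bias of the Thue–Morse ordering. -/
theorem thue_morse_bias_lower_bound :
    ∃ c : ℝ, 0 < c ∧ ∃ ε₀ : ℝ, 0 < ε₀ ∧ ∀ ε : ℝ, 0 < ε → ε < ε₀ →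
      ε * ∏' n : ℕ, (1 - (1 - ε) ^ 2 ^ n) ≥ Real.exp (-c * (Real.log ε) ^ 2) := by
  refine ⟨4, by norm_num, exp (-2), exp_pos _, fun ε hε0 hε ↦ ?_⟩
  have hlog : log ε < -2 := by simpa using log_lt_log hε0 hε
  have hε1 : ε < 1 := hε.trans (exp_lt_one_iff.2 (by norm_num))
  obtain ⟨N, hN, hNlog⟩ := exists_one_le_two_pow_mul_and_le_one_sub_two_mul_log hε0 hε1.le
  calc exp (-4 * log ε ^ 2) ≤ exp (((N + 1 : ℕ) : ℝ) * log ε - 2) := by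
        gcongr; push_cast; nlinarith
    _ = ε ^ (N + 1) * exp (-2) := by
        rw [sub_eq_add_neg, exp_add, exp_nat_mul, exp_log hε0]
    _ ≤ ε * ∏' n : ℕ, (1 - (1 - ε) ^ 2 ^ n) :=
        pow_succ_mul_exp_neg_two_le_thueMorse_bias hε0 hε1.le hN
end
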